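/- arXiv:1709.00589 — 2 statements merged into one kernel-verified Lean document; each statement's English description precedes it below -/
import Mathlib

section
/- If T is a tree of order n ≥ 10 and diameter n − 2, then θ_3(T) ≤ 2. -/
namespace AscPaper

open SimpleGraph

/-- The eccentricity of a vertex `u` in a graph `G`, as an extended natural number:
the supremum of distances from `u` to all vertices. -/
noncomputable def ecc {V : Type*} (G : SimpleGraph V) (u : V) : ℕ∞ :=
  ⨆ v, G.edist u v

/-- The radius of a graph: the minimum eccentricity over all vertices. -/
noncomputable def graphRadius {V : Type*} (G : SimpleGraph V) : ℕ∞ :=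
  ⨅ u, ecc G u

/-- The diameter of a graph: the maximum eccentricity over all vertices. -/
noncomputable def graphDiam {V : Type*} (G : SimpleGraph V) : ℕ∞ :=
  ⨆ u, ecc G u

/-- The eccentric set of `u`: all vertices at distance exactly `ecc G u` from `u`. -/
def eccSet {V : Type*} (G : SimpleGraph V) (u : V) : Set V :=
  {v | G.edist u v = ecc G u}

/-- `H` is an `r`-ASC (almost self-centered) graph: `H` is connected, has radius `r`,
and all but exactly two vertices are central (have eccentricity equal to the radius). -/
def IsASC {V : Type*} (r : ℕ) (H : SimpleGraph V) : Prop :=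
  H.Connected ∧ graphRadius H = (r : ℕ∞) ∧
    {u : V | ecc H u ≠ graphRadius H}.ncard = 2

/-- The `r`-ASC index of a graph `G`: the minimum number `k` of vertices that need to be
added to `G` so that the resulting graph is an `r`-ASC graph containing `G` as an
induced subgraph. -/
noncomputable def theta {V : Type*} (r : ℕ) (G : SimpleGraph V) : ℕ :=
  sInf {k : ℕ | ∃ H : SimpleGraph (V ⊕ Fin k), IsASC r H ∧
    ∀ u v : V, H.Adj (Sum.inl u) (Sum.inl v) ↔ G.Adj u v}

end AscPaper

/-!
Let `a` be an end of a diametral path of `T` and sort the vertices into levels by their distance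
from `a`. The `n - 1` levels `0, …, n - 2` are nonempty and together hold `n` vertices, so all
levels but one are single vertices, and for some `s ≤ 3` the levels `s`, `s + 1`, `s + 2`, `s + 5`
are singletons. Add two adjacent vertices `x = .inr 0` and `y = .inr 1`, joining `x` to every
vertex outside the levels `s, …, s + 2` and `y` to every vertex outside the levels
`s + 1, …, s + 3` and `s + 5`. Explicit paths of length at most `3` bound every eccentricity by
`3`, except those of the vertices on levels `s + 1` and `s + 5`. Conversely, clamping levels to
`s - 2, …, s + 7` maps the new graph onto the same construction over a path on ten vertices
without increasing distances, and in that twelve-vertex model a table of distances shows that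
every eccentricity is at least `3` and that the two exceptional levels are at distance `4`.
-/

namespace SimpleGraph

variable {V W : Type*} {G : SimpleGraph V}

lemma edist_le_two_of_adj_of_adj {u v w : V} (h₁ : G.Adj u v) (h₂ : G.Adj v w) :
    G.edist u w ≤ 2 := by
  simpa using G.edist_le (.cons h₁ (.cons h₂ .nil))

lemma edist_le_three_of_adj_of_le_two {u v w : V} (h₁ : G.Adj u v) (h₂ : G.edist v w ≤ 2) :
    G.edist u w ≤ 3 :=
  calc G.edist u w ≤ G.edist u v + G.edist v w := G.edist_triangle
    _ ≤ 1 + 2 := add_le_add (edist_le_one_iff_adj_or_eq.2 (.inl h₁)) h₂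
    _ = 3 := by norm_num

lemma edist_le_three_of_adj_of_adj_of_adj {u v w x : V} (h₁ : G.Adj u v) (h₂ : G.Adj v w)
    (h₃ : G.Adj w x) : G.edist u x ≤ 3 :=
  edist_le_three_of_adj_of_le_two h₁ (edist_le_two_of_adj_of_adj h₂ h₃)

lemma edist_map_le_of_forall_adj {G' : SimpleGraph W} (π : V → W)
    (hπ : ∀ a b, G.Adj a b → π a = π b ∨ G'.Adj (π a) (π b)) (u v : V) :
    G'.edist (π u) (π v) ≤ G.edist u v := by
  suffices ∀ {u v} (p : G.Walk u v), G'.edist (π u) (π v) ≤ p.length by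
    rw [edist_eq_sInf]
    exact le_sInf <| by rintro _ ⟨p, rfl⟩; exact this p
  intro u v p
  induction p with
  | nil => simp
  | @cons a b c h p ih =>
    calc G'.edist (π a) (π c) ≤ G'.edist (π a) (π b) + G'.edist (π b) (π c) :=
          G'.edist_triangle
      _ ≤ 1 + p.length := add_le_add (edist_le_one_iff_adj_or_eq.2 (hπ a b h).symm) ih
      _ = (p.cons h).length := by push_cast [Walk.length_cons]; ring

lemma le_add_edist_of_forall_adj {φ : V → ℕ} (hφ : ∀ a b, G.Adj a b → φ a ≤ φ b + 1)
    (u v : V) : (φ u : ℕ∞) ≤ φ v + G.edist u v := by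
  by_cases huv : G.Reachable u v
  · obtain ⟨p, hp⟩ := huv.exists_walk_length_eq_edist
    suffices ∀ {u w} (p : G.Walk u w), φ u ≤ φ w + p.length by
      rw [← hp]; exact_mod_cast this p
    intro u w p
    induction p with
    | nil => simp
    | cons h p ih => have := hφ _ _ h; simp only [Walk.length_cons]; omega
  · simp [edist_eq_top_of_not_reachable huv]

lemma Adj.dist_le_dist_add_one {u v : V} (h : G.Adj u v) (a : V) :
    G.dist a u ≤ G.dist a v + 1 := by
  rcases h.symm.diff_dist_adj (u := a) with h | h | h <;> omega

def HasDescent (G : SimpleGraph V) (f : V → ℕ) : Prop :=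
  ∀ v, f v ≠ 0 → ∃ u, G.Adj v u ∧ f u + 1 = f v

lemma Connected.hasDescent_dist (hG : G.Connected) (a : V) : G.HasDescent (G.dist a) := by
  intro v hv
  obtain ⟨p, hp⟩ := (hG v a).exists_walk_length_eq_dist
  cases p with
  | nil => exact absurd dist_self hv
  | @cons _ w _ h q =>
    refine ⟨w, h, le_antisymm ?_ (h.dist_le_dist_add_one a)⟩
    have : G.dist w a ≤ q.length := dist_le q
    rw [dist_comm (u := a), dist_comm (u := a), ← hp, Walk.length_cons]
    omega

namespace HasDescent

variable {f : V → ℕ} {k : ℕ} {v w : V}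

lemma exists_eq_of_le (hf : G.HasDescent f) (hk : k ≤ f w) : ∃ u, f u = k := by
  induction h : f w - k generalizing w with
  | zero => exact ⟨w, by omega⟩
  | succ j ih =>
    obtain ⟨u, -, hu⟩ := hf w (by omega)
    exact ih (w := u) (by omega) (by omega)

lemma adj_of_eq_add_one (hf : G.HasDescent f) (hk : (f ⁻¹' {k}).Subsingleton) (hv : f v = k)
    (hw : f w = k + 1) : G.Adj w v := by
  obtain ⟨u, hwu, hu⟩ := hf w (by omega)
  rwa [hk (show f u = k by omega) hv] at hwu

lemma exists_adj_adj_of_eq_add_two (hf : G.HasDescent f) (hk : (f ⁻¹' {k}).Subsingleton)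
    (hv : f v = k) (hw : f w = k + 2) : ∃ u, G.Adj w u ∧ G.Adj u v := by
  obtain ⟨u, hwu, hu⟩ := hf w (by omega)
  exact ⟨u, hwu, hf.adj_of_eq_add_one hk hv (by omega)⟩

end HasDescent

end SimpleGraph

namespace AscPaper

open SimpleGraph

lemma exists_forall_ne_subsingleton_preimage {V : Type*} [Fintype V] (f : V → ℕ) (m : ℕ)
    (hf : ∀ k ≤ m, ∃ v, f v = k) (hcard : Fintype.card V ≤ m + 2) :
    ∃ j, ∀ k ≠ j, (f ⁻¹' {k}).Subsingleton := by
  classical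
  choose σ hσ using fun k : Fin (m + 1) => hf k (by omega)
  have hσ_inj : Function.Injective σ := fun i j h => Fin.ext (by rw [← hσ i, ← hσ j, h])
  have hrest : ∀ u v, u ∉ Set.range σ → v ∉ Set.range σ → u = v := by
    have : (Finset.univ \ Finset.univ.image σ).card ≤ 1 := by
      rw [Finset.card_sdiff_of_subset (Finset.subset_univ _), Finset.card_univ,
        Finset.card_image_of_injective _ hσ_inj, Finset.card_univ, Fintype.card_fin]
      omega
    intro u v hu hv
    exact Finset.card_le_one.1 this u (by simpa using hu) v (by simpa using hv)
  have hlevel : ∀ u ∈ Set.range σ, ∀ v ∈ Set.range σ, f u = f v → u = v := by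
    rintro _ ⟨i, rfl⟩ _ ⟨j, rfl⟩ h
    exact congrArg σ (Fin.ext (by rw [← hσ i, ← hσ j, h]))
  by_cases hsurj : ∀ w, w ∈ Set.range σ
  · exact ⟨0, fun k _ u hu v hv => hlevel u (hsurj u) v (hsurj v) (hu.trans hv.symm)⟩
  obtain ⟨w, hw⟩ := not_forall.1 hsurj
  have hmem : ∀ u, f u ≠ f w → u ∈ Set.range σ := fun u hu => by
    by_contra h
    exact hu (by rw [hrest u w h hw])
  refine ⟨f w, fun k hk u (hu : f u = k) v (hv : f v = k) => ?_⟩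
  exact hlevel u (hmem u (hu ▸ hk)) v (hmem v (hv ▸ hk)) (hu.trans hv.symm)

lemma graphDiam_eq_ediam {V : Type*} (G : SimpleGraph V) : graphDiam G = G.ediam := rfl

lemma isASC_iff {V : Type*} {r : ℕ} {H : SimpleGraph V} :
    IsASC r H ↔ H.Connected ∧ H.radius = r ∧ {u | H.eccent u ≠ H.radius}.ncard = 2 :=
  Iff.rfl

def apexAdj (s : ℕ) : Fin 2 → ℕ → Prop
  | 0, c => c < s ∨ s + 2 < c
  | 1, c => c ≤ s ∨ c = s + 4 ∨ s + 6 ≤ c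

instance (s : ℕ) : ∀ i c, Decidable (apexAdj s i c)
  | 0, _ => inferInstanceAs (Decidable (_ ∨ _))
  | 1, _ => inferInstanceAs (Decidable (_ ∨ _))

def ascExtension {V : Type*} (T : SimpleGraph V) (f : V → ℕ) (s : ℕ) :
    SimpleGraph (V ⊕ Fin 2) where
  Adj
    | .inl u, .inl v => T.Adj u v
    | .inl v, .inr i => apexAdj s i (f v)
    | .inr i, .inl v => apexAdj s i (f v)
    | .inr i, .inr j => i ≠ j
  symm := ⟨by
    rintro (u | i) (v | j) h
    · exact h.symm
    · exact h
    · exact h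
    · exact Ne.symm h⟩
  loopless := ⟨by
    rintro (u | i) h
    · exact T.loopless.irrefl u h
    · exact h rfl⟩

instance {V : Type*} (T : SimpleGraph V) [DecidableRel T.Adj] (f : V → ℕ) (s : ℕ) :
    DecidableRel (ascExtension T f s).Adj
  | .inl u, .inl v => inferInstanceAs (Decidable (T.Adj u v))
  | .inl v, .inr i => inferInstanceAs (Decidable (apexAdj s i (f v)))
  | .inr i, .inl v => inferInstanceAs (Decidable (apexAdj s i (f v)))
  | .inr i, .inr j => inferInstanceAs (Decidable (i ≠ j))

section UpperBounds

variable {V : Type*} {T : SimpleGraph V} {f : V → ℕ} {s : ℕ} {u v : V}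

lemma adj_inr_zero_iff :
    (ascExtension T f s).Adj (.inr 0) (.inl v) ↔ f v < s ∨ s + 2 < f v :=
  Iff.rfl

lemma adj_inr_one_iff :
    (ascExtension T f s).Adj (.inr 1) (.inl v) ↔ f v ≤ s ∨ f v = s + 4 ∨ s + 6 ≤ f v :=
  Iff.rfl

lemma adj_inl_inl_of_adj (h : T.Adj u v) : (ascExtension T f s).Adj (.inl u) (.inl v) := h

lemma adj_inr_zero_inr_one : (ascExtension T f s).Adj (.inr 0) (.inr 1) := zero_ne_one

lemma edist_inr_inr_le_one (i j : Fin 2) : (ascExtension T f s).edist (.inr i) (.inr j) ≤ 1 := by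
  refine edist_le_one_iff_adj_or_eq.2 ?_
  rcases eq_or_ne i j with rfl | h
  · exact .inr rfl
  · exact .inl h

lemma edist_inl_inl_le_two_of_adj {c w : V} (h₁ : T.Adj u c) (h₂ : T.Adj c w) :
    (ascExtension T f s).edist (.inl u) (.inl w) ≤ 2 :=
  edist_le_two_of_adj_of_adj (adj_inl_inl_of_adj h₁) (adj_inl_inl_of_adj h₂)

lemma edist_inr_zero_le_two (hf : T.HasDescent f) (h3 : ∃ w, f w = s + 3)
    (h2 : (f ⁻¹' {s + 2}).Subsingleton) (hv : f v ≠ s + 1) :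
    (ascExtension T f s).edist (.inr 0) (.inl v) ≤ 2 := by
  by_cases hx : f v < s ∨ s + 2 < f v
  · exact (edist_le_one_iff_adj_or_eq.2 (.inl (adj_inr_zero_iff.2 hx))).trans (by norm_num)
  rcases (by omega : f v = s ∨ f v = s + 2) with hv | hv
  · exact edist_le_two_of_adj_of_adj adj_inr_zero_inr_one (adj_inr_one_iff.2 (by omega))
  · obtain ⟨w, hw⟩ := h3
    exact edist_le_two_of_adj_of_adj (adj_inr_zero_iff.2 (by omega))
      (adj_inl_inl_of_adj (hf.adj_of_eq_add_one h2 hv hw))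

lemma edist_inr_one_le_two (hf : T.HasDescent f) (hv : f v ≠ s + 2) :
    (ascExtension T f s).edist (.inr 1) (.inl v) ≤ 2 := by
  by_cases hy : f v ≤ s ∨ f v = s + 4 ∨ s + 6 ≤ f v
  · exact (edist_le_one_iff_adj_or_eq.2 (.inl (adj_inr_one_iff.2 hy))).trans (by norm_num)
  by_cases hv1 : f v = s + 1
  · obtain ⟨z, hvz, hz⟩ := hf v (by omega)
    exact edist_le_two_of_adj_of_adj (adj_inr_one_iff.2 (by omega)) (adj_inl_inl_of_adj hvz.symm)
  · exact edist_le_two_of_adj_of_adj adj_inr_zero_inr_one.symm (adj_inr_zero_iff.2 (by omega))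

lemma eccent_inr_le_three (hf : T.HasDescent f) (h3 : ∃ w, f w = s + 3)
    (h2 : (f ⁻¹' {s + 2}).Subsingleton) (i : Fin 2) :
    (ascExtension T f s).eccent (.inr i) ≤ 3 := by
  rw [eccent_le_iff]
  rintro (v | j)
  swap
  · exact (edist_inr_inr_le_one i j).trans (by norm_num)
  fin_cases i
  · by_cases hv : f v = s + 1
    · obtain ⟨z, hvz, hz⟩ := hf v (by omega)
      exact edist_le_three_of_adj_of_adj_of_adj adj_inr_zero_inr_one
        (adj_inr_one_iff.2 (by omega)) (adj_inl_inl_of_adj hvz.symm)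
    · exact (edist_inr_zero_le_two hf h3 h2 hv).trans (by norm_num)
  · by_cases hv : f v = s + 2
    · obtain ⟨w, hw⟩ := h3
      exact edist_le_three_of_adj_of_adj_of_adj adj_inr_zero_inr_one.symm
        (adj_inr_zero_iff.2 (by omega)) (adj_inl_inl_of_adj (hf.adj_of_eq_add_one h2 hv hw))
    · exact (edist_inr_one_le_two hf hv).trans (by norm_num)

lemma edist_inl_le_three_of_eq_add_two (hf : T.HasDescent f) (h3 : ∃ w, f w = s + 3)
    (h0 : (f ⁻¹' {s}).Subsingleton) (h1 : (f ⁻¹' {s + 1}).Subsingleton)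
    (h2 : (f ⁻¹' {s + 2}).Subsingleton) (hu : f u = s + 2) (w : V) :
    (ascExtension T f s).edist (.inl u) (.inl w) ≤ 3 := by
  by_cases hx : f w < s ∨ s + 2 < f w
  · obtain ⟨p, hp⟩ := h3
    exact edist_le_three_of_adj_of_adj_of_adj
      (adj_inl_inl_of_adj (hf.adj_of_eq_add_one h2 hu hp).symm)
      (adj_inr_zero_iff.2 (by omega)).symm (adj_inr_zero_iff.2 hx)
  rcases (by omega : f w = s ∨ f w = s + 1 ∨ f w = s + 2) with hw | hw | hw
  · obtain ⟨c, huc, hcw⟩ := hf.exists_adj_adj_of_eq_add_two h0 hw hu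
    exact (edist_inl_inl_le_two_of_adj huc hcw).trans (by norm_num)
  · have := adj_inl_inl_of_adj (f := f) (s := s) (hf.adj_of_eq_add_one h1 hw hu)
    exact (edist_le_one_iff_adj_or_eq.2 (.inl this)).trans (by norm_num)
  · simp [h2 hu hw]

lemma edist_inl_le_three (hf : T.HasDescent f) (h3 : ∃ w, f w = s + 3)
    (h0 : (f ⁻¹' {s}).Subsingleton) (h1 : (f ⁻¹' {s + 1}).Subsingleton)
    (h2 : (f ⁻¹' {s + 2}).Subsingleton) (hu1 : f u ≠ s + 1) (hu5 : f u ≠ s + 5) (w : V) :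
    (ascExtension T f s).edist (.inl u) (.inl w) ≤ 3 := by
  have via_zero (hu : f u < s ∨ s + 2 < f u) (hw : f w ≠ s + 1) :
      (ascExtension T f s).edist (.inl u) (.inl w) ≤ 3 :=
    edist_le_three_of_adj_of_le_two (adj_inr_zero_iff.2 hu).symm
      (edist_inr_zero_le_two hf h3 h2 hw)
  have via_one (hu : f u ≤ s ∨ f u = s + 4 ∨ s + 6 ≤ f u) (hw : f w ≠ s + 2) :
      (ascExtension T f s).edist (.inl u) (.inl w) ≤ 3 :=
    edist_le_three_of_adj_of_le_two (adj_inr_one_iff.2 hu).symm (edist_inr_one_le_two hf hw)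
  rcases (by omega : f u = s ∨ f u = s + 2 ∨ f u = s + 3 ∨
      f u < s ∨ f u = s + 4 ∨ s + 6 ≤ f u) with hu | hu | hu | hu
  · by_cases hw : f w = s + 2
    · obtain ⟨c, hwc, hcu⟩ := hf.exists_adj_adj_of_eq_add_two h0 hu hw
      rw [SimpleGraph.edist_comm]
      exact (edist_inl_inl_le_two_of_adj hwc hcu).trans (by norm_num)
    · exact via_one (by omega) hw
  · exact edist_inl_le_three_of_eq_add_two hf h3 h0 h1 h2 hu w
  · by_cases hw : f w = s + 1
    · obtain ⟨c, huc, hcw⟩ := hf.exists_adj_adj_of_eq_add_two h1 hw (by omega)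
      exact (edist_inl_inl_le_two_of_adj huc hcw).trans (by norm_num)
    · exact via_zero (by omega) hw
  · by_cases hw : f w = s + 1
    · exact via_one (by omega) (by omega)
    · exact via_zero (by omega) hw

lemma eccent_inl_le_three (hf : T.HasDescent f) (h3 : ∃ w, f w = s + 3)
    (h0 : (f ⁻¹' {s}).Subsingleton) (h1 : (f ⁻¹' {s + 1}).Subsingleton)
    (h2 : (f ⁻¹' {s + 2}).Subsingleton) (hu1 : f u ≠ s + 1) (hu5 : f u ≠ s + 5) :
    (ascExtension T f s).eccent (.inl u) ≤ 3 := by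
  rw [eccent_le_iff]
  rintro (w | i)
  · exact edist_inl_le_three hf h3 h0 h1 h2 hu1 hu5 w
  · rw [SimpleGraph.edist_comm]
    exact (eccent_le_iff _ _).1 (eccent_inr_le_three hf h3 h2 i) _

end UpperBounds

instance (n : ℕ) : DecidableRel (pathGraph n).Adj := fun _ _ => decidable_of_iff' _ pathGraph_adj

abbrev modelGraph : SimpleGraph (Fin 10 ⊕ Fin 2) := ascExtension (pathGraph 10) Fin.val 2

def levelClass (s c : ℕ) : Fin 10 := ⟨min (c + 2 - s) 9, by omega⟩

def modelTarget : Fin 4 → Fin 10 := ![2, 3, 4, 7]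

/-- Row `k` lists the distances in `modelGraph` to `.inl (modelTarget k)`. -/
def modelPotential : Fin 4 → Fin 10 ⊕ Fin 2 → ℕ :=
  ![Sum.elim ![2, 1, 0, 1, 2, 3, 2, 3, 2, 2] ![2, 1],
    Sum.elim ![3, 2, 1, 0, 1, 2, 3, 4, 3, 3] ![3, 2],
    Sum.elim ![3, 3, 2, 1, 0, 1, 2, 3, 3, 3] ![2, 3],
    Sum.elim ![2, 2, 3, 4, 3, 2, 1, 0, 1, 2] ![1, 2]]

lemma modelPotential_le_edist (k : Fin 4) (p : Fin 10 ⊕ Fin 2) :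
    (modelPotential k p : ℕ∞) ≤ modelGraph.edist p (.inl (modelTarget k)) := by
  have hlip : ∀ k p q, modelGraph.Adj p q → modelPotential k p ≤ modelPotential k q + 1 := by
    decide
  have hzero : modelPotential k (.inl (modelTarget k)) = 0 := by revert k; decide
  simpa [hzero] using le_add_edist_of_forall_adj (hlip k) p (.inl (modelTarget k))

lemma modelGraph_exists_three_le_edist (p : Fin 10 ⊕ Fin 2) :
    ∃ k, 3 ≤ modelGraph.edist p (.inl (modelTarget k)) := by
  obtain ⟨k, hk⟩ : ∃ k, 3 ≤ modelPotential k p := by revert p; decide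
  exact ⟨k, le_trans (by exact_mod_cast hk) (modelPotential_le_edist k p)⟩

lemma modelGraph_four_le_edist : 4 ≤ modelGraph.edist (.inl 3) (.inl 7) :=
  le_trans (by decide) (modelPotential_le_edist 3 (.inl 3))

section LowerBounds

variable {V : Type*} {T : SimpleGraph V} {f : V → ℕ} {s : ℕ}

lemma apexAdj_levelClass (i : Fin 2) (c : ℕ) :
    apexAdj 2 i (levelClass s c) ↔ apexAdj s i c := by
  fin_cases i <;> simp only [apexAdj, levelClass] <;> omega

lemma edist_levelClass_le (hlip : ∀ u v, T.Adj u v → f u ≤ f v + 1)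
    (a b : V ⊕ Fin 2) :
    modelGraph.edist (Sum.map (levelClass s ∘ f) id a) (Sum.map (levelClass s ∘ f) id b) ≤
      (ascExtension T f s).edist a b := by
  refine edist_map_le_of_forall_adj _ ?_ a b
  rintro (u | i) (v | j) h
  · have := hlip u v h
    have := hlip v u h.symm
    by_cases heq : levelClass s (f u) = levelClass s (f v)
    · exact .inl (by simp [heq])
    · refine .inr (pathGraph_adj.2 ?_)
      simp only [levelClass, Function.comp_apply, Fin.ext_iff] at heq ⊢
      omega
  · exact .inr ((apexAdj_levelClass j (f u)).2 h)
  · exact .inr ((apexAdj_levelClass i (f v)).2 h)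
  · exact .inr h

lemma three_le_eccent (hlip : ∀ u v, T.Adj u v → f u ≤ f v + 1)
    (hrep : ∀ j ≤ 5, ∃ v, f v = s + j) (a : V ⊕ Fin 2) :
    3 ≤ (ascExtension T f s).eccent a := by
  obtain ⟨k, hk⟩ := modelGraph_exists_three_le_edist (Sum.map (levelClass s ∘ f) id a)
  obtain ⟨w, hw⟩ : ∃ w, levelClass s (f w) = modelTarget k := by
    have hk : 2 ≤ (modelTarget k : ℕ) ∧ (modelTarget k : ℕ) ≤ 7 := by
      fin_cases k <;> decide
    obtain ⟨w, hw⟩ := hrep (modelTarget k - 2) (by omega)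
    exact ⟨w, Fin.ext (by simp only [levelClass, hw]; omega)⟩
  calc 3 ≤ modelGraph.edist (Sum.map (levelClass s ∘ f) id a)
        (Sum.map (levelClass s ∘ f) id (.inl w)) := by simpa [hw] using hk
    _ ≤ (ascExtension T f s).edist a (.inl w) := edist_levelClass_le hlip a _
    _ ≤ (ascExtension T f s).eccent a := edist_le_eccent

lemma four_le_edist (hlip : ∀ u v, T.Adj u v → f u ≤ f v + 1) {u w : V} (hu : f u = s + 1)
    (hw : f w = s + 5) : 4 ≤ (ascExtension T f s).edist (.inl u) (.inl w) := by
  have hu' : levelClass s (f u) = 3 := Fin.ext (by simp [levelClass, hu]; omega)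
  have hw' : levelClass s (f w) = 7 := Fin.ext (by simp [levelClass, hw]; omega)
  have := edist_levelClass_le hlip (s := s) (.inl u) (.inl w)
  simp only [Sum.map_inl, Function.comp_apply, hu', hw'] at this
  exact modelGraph_four_le_edist.trans this

end LowerBounds

lemma isASC_of_eccent {W : Type*} {H : SimpleGraph W} {r : ℕ} {c p q : W}
    (hc : H.eccent c = r) (hle : ∀ a, r ≤ H.eccent a) (hpq : p ≠ q) (hp : H.eccent p ≠ r)
    (hq : H.eccent q ≠ r) (hcentral : ∀ a, a ≠ p → a ≠ q → H.eccent a = r) :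
    IsASC r H := by
  have hrad : H.radius = r := le_antisymm (radius_le_eccent.trans_eq hc) (le_iInf hle)
  refine isASC_iff.2 ⟨?_, hrad, ?_⟩
  · refine (connected_iff_exists_forall_reachable H).2 ⟨c, fun a => ?_⟩
    refine reachable_of_edist_ne_top (ne_top_of_le_ne_top (b := r) (ENat.natCast_ne_top r) ?_)
    exact edist_le_eccent.trans hc.le
  · rw [hrad, ← Set.ncard_pair hpq]
    congr 1
    ext a
    simp only [Set.mem_ofPred_eq, Set.mem_insert_iff, Set.mem_singleton_iff]
    refine ⟨fun ha => ?_, ?_⟩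
    · by_contra hmem
      exact ha (hcentral a (fun h => hmem (.inl h)) (fun h => hmem (.inr h)))
    · rintro (rfl | rfl) <;> assumption

theorem isASC_ascExtension {V : Type*} {T : SimpleGraph V} {f : V → ℕ} {s : ℕ}
    (hlip : ∀ u v, T.Adj u v → f u ≤ f v + 1) (hf : T.HasDescent f) (h5 : ∃ v, f v = s + 5)
    (hsub : ∀ k ∈ ({s, s + 1, s + 2, s + 5} : Set ℕ), (f ⁻¹' {k}).Subsingleton) :
    IsASC 3 (ascExtension T f s) := by
  obtain ⟨p₅, hp₅⟩ := h5
  have hrep : ∀ j ≤ 5, ∃ v, f v = s + j := fun j _ =>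
    hf.exists_eq_of_le (w := p₅) (by omega)
  obtain ⟨p₁, hp₁⟩ := hrep 1 (by omega)
  have h₁ := hsub (s + 1) (by simp)
  have h₂ := hsub (s + 2) (by simp)
  have h₅ := hsub (s + 5) (by simp)
  have hcentral (a : V ⊕ Fin 2) (ha₁ : a ≠ .inl p₁) (ha₅ : a ≠ .inl p₅) :
      (ascExtension T f s).eccent a = 3 := by
    refine le_antisymm ?_ (three_le_eccent hlip hrep a)
    rcases a with u | i
    · refine eccent_inl_le_three hf (hrep 3 (by omega)) (hsub s (by simp)) h₁ h₂ ?_ ?_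
      · exact fun h => ha₁ (congrArg _ (h₁ h hp₁))
      · exact fun h => ha₅ (congrArg _ (h₅ h hp₅))
    · exact eccent_inr_le_three hf (hrep 3 (by omega)) h₂ i
  have hd₁₅ := four_le_edist hlip hp₁ hp₅
  have hne_three {a b : V ⊕ Fin 2} (h : 4 ≤ (ascExtension T f s).edist a b) :
      (ascExtension T f s).eccent a ≠ 3 :=
    fun he => absurd (h.trans (edist_le_eccent.trans he.le)) (by decide)
  refine isASC_of_eccent (hcentral (.inr 0) (by simp) (by simp)) (three_le_eccent hlip hrep)
    ?_ (hne_three hd₁₅) (hne_three (SimpleGraph.edist_comm ▸ hd₁₅)) hcentral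
  exact fun h => by have := congrArg f (Sum.inl_injective h); omega

theorem theta_three_tree_le_general {V : Type*} [Fintype V] (T : SimpleGraph V) (n : ℕ)
    (hcard : Fintype.card V = n) (hn : 10 ≤ n)
    (hconn : T.Connected)
    (hdiam : graphDiam T = ((n - 2 : ℕ) : ℕ∞)) :
    theta 3 T ≤ 2 := by
  have : Nonempty V := Fintype.card_pos_iff.1 (by omega)
  obtain ⟨a, b, hab⟩ := T.exists_edist_eq_ediam_of_finite
  rw [← graphDiam_eq_ediam, hdiam] at hab
  have hb : T.dist a b = n - 2 := by exact_mod_cast (hconn a b).coe_dist_eq_edist.trans hab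
  have hf := hconn.hasDescent_dist a
  obtain ⟨j, hj⟩ := exists_forall_ne_subsingleton_preimage (T.dist a) (n - 2)
    (fun k hk => hf.exists_eq_of_le (w := b) (by omega)) (by omega)
  obtain ⟨s, hs, hsj⟩ : ∃ s ≤ 3, j ∉ ({s, s + 1, s + 2, s + 5} : Set ℕ) := by
    simp only [Set.mem_insert_iff, Set.mem_singleton_iff, not_or]
    by_cases h12 : j = 1 ∨ j = 2
    · exact ⟨3, by omega⟩
    · by_cases h05 : j = 0 ∨ j = 5
      · exact ⟨1, by omega⟩
      · exact ⟨0, by omega⟩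
  refine Nat.sInf_le ⟨ascExtension T (T.dist a) s, ?_, fun _ _ => Iff.rfl⟩
  exact isASC_ascExtension (fun u v h => h.dist_le_dist_add_one a) hf
    (hf.exists_eq_of_le (w := b) (k := s + 5) (by omega))
    (fun k hk => hj k (by rintro rfl; exact hsj hk))

/-- If `T` is a tree of order `n ≥ 10` and diameter `n − 2`, then `θ_3(T) ≤ 2`. -/
theorem theta_three_tree_le {V : Type*} [Fintype V] (T : SimpleGraph V) (n : ℕ)
    (hcard : Fintype.card V = n) (hn : 10 ≤ n)
    (hconn : T.Connected) (hacyclic : T.IsAcyclic)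
    (hdiam : graphDiam T = ((n - 2 : ℕ) : ℕ∞)) :
    theta 3 T ≤ 2 :=
  theta_three_tree_le_general T n hcard hn hconn hdiam

end AscPaper
end

section
/- For every integer t ≥ 3, the 3-ASC index of the graph K_1 ⊕ tP_2 (the join of a single vertex with the disjoint union of t copies of P_2) equals 4, i.e., θ_3(K_1 ⊕ tP_2) = 4. -/
namespace AscPaper

open SimpleGraph

/-- The join `K_1 ⊕ tP_2` of a single vertex with the disjoint union of `t` copies of
`P_2`: the vertex `none` is joined to all other vertices, and `some (i, a)` is adjacent
to `some (j, b)` exactly when `i = j` and `a ≠ b`. -/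
def K1JoinTP2 (t : ℕ) : SimpleGraph (Option (Fin t × Fin 2)) :=
  SimpleGraph.fromRel (fun x y => x = none ∨ ∃ i a b, x = some (i, a) ∧ y = some (i, b))

/-!
Upper bound (`fourExtension`): join the pair `0` to a new vertex `inr 0`, every other pair to
`inr 1`, and `inr 2` to `inr 0`, `inr 1`, `inr 3`. Every vertex except `inr 3` lies on a path of
length 3 from the centre `c = inl none` to `inr 2`, so all distances are at most 3 except
`d(c, inr 3) = 4`.

Lower bound: old vertices are pairwise at distance at most 2, so `c` is at distance 3 from a new
vertex `f`, reached by a geodesic `c, x, u, f` with `u` new. A vertex within distance 1 of `c` needs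
a new vertex at distance 3, so `x` cannot reach every new vertex through `u`: this rules out two
added vertices, and with a third one `v` it rules out `u ~ v`. Otherwise `f` hangs on `u`, or `v`
hangs on `f`, and either forces a third non-central vertex or a vertex of eccentricity 2; or `u`
and `v` both lie at distance 2 from `c` next to `f`: a pair adjacent to neither of them then yields
three non-central vertices, and without such a pair every eccentricity is at most 3.
-/

open Sum

section Distance

variable {V : Type*} {G : SimpleGraph V} {u v w : V}

theorem _root_.SimpleGraph.Connected.dist_le_dist_add_one (hG : G.Connected) (h : G.Adj u w) :
    G.dist u v ≤ G.dist w v + 1 := by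
  have := hG.dist_triangle (u := u) (v := w) (w := v)
  rw [dist_eq_one_iff_adj.mpr h] at this
  omega

theorem _root_.SimpleGraph.Connected.exists_adj_dist_eq_add_one (hG : G.Connected) (hne : u ≠ v) :
    ∃ w, G.Adj u w ∧ G.dist u v = G.dist w v + 1 := by
  obtain ⟨p, hp⟩ := hG.exists_walk_length_eq_dist u v
  cases p with
  | nil => exact absurd rfl hne
  | @cons _ w _ h q =>
    have := hG.dist_le_dist_add_one (v := v) h
    have := dist_le q
    exact ⟨w, h, by simp only [Walk.length_cons] at hp; omega⟩

theorem _root_.SimpleGraph.Connected.le_dist_of_forall_adj (hG : G.Connected) (hne : u ≠ v)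
    {n : ℕ} (h : ∀ w, G.Adj u w → n ≤ G.dist w v) : n + 1 ≤ G.dist u v := by
  obtain ⟨w, huw, hd⟩ := hG.exists_adj_dist_eq_add_one hne
  have := h w huw
  omega

theorem _root_.SimpleGraph.Connected.three_le_dist (hG : G.Connected) (hne : u ≠ v)
    (hnadj : ¬ G.Adj u v) (h : ∀ w, G.Adj u w → ¬ G.Adj w v) : 3 ≤ G.dist u v :=
  hG.le_dist_of_forall_adj hne fun w hw ↦
    hG.one_lt_dist_of_ne_of_not_adj (fun e ↦ hnadj (e ▸ hw)) (h w hw)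

theorem _root_.SimpleGraph.Connected.exists_adj_adj_of_dist_le_two (hG : G.Connected)
    (hne : u ≠ v) (hnadj : ¬ G.Adj u v) (h : G.dist u v ≤ 2) : ∃ w, G.Adj u w ∧ G.Adj w v := by
  obtain ⟨w, huw, hd⟩ := hG.exists_adj_dist_eq_add_one hne
  have := hG.one_lt_dist_of_ne_of_not_adj hne hnadj
  exact ⟨w, huw, dist_eq_one_iff_adj.mp (by omega)⟩

theorem _root_.SimpleGraph.Connected.dist_eq_dist_add_one_of_forall_adj_eq (hG : G.Connected)
    {f p : V} (hp : ∀ z, G.Adj f z → z = p) (hw : w ≠ f) :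
    G.dist w f = G.dist w p + 1 := by
  obtain ⟨z, hfz, hd⟩ := hG.exists_adj_dist_eq_add_one hw.symm
  rw [hp z hfz] at hd
  rw [dist_comm, hd, dist_comm]

theorem _root_.SimpleGraph.Connected.exists_dist_eq_of_le (hG : G.Connected) {n : ℕ}
    (h : n ≤ G.dist u v) : ∃ w, G.dist u w = n := by
  obtain ⟨k, hk⟩ := Nat.exists_eq_add_of_le h
  induction k generalizing v with
  | zero => exact ⟨v, hk⟩
  | succ k ih =>
    have hne : v ≠ u := fun e ↦ by simp [e] at hk
    obtain ⟨w, -, hd⟩ := hG.exists_adj_dist_eq_add_one hne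
    have : G.dist u w = n + k := by rw [dist_comm, dist_comm (u := w)] at hd; omega
    exact ih (by omega) this

end Distance

section Eccentricity

variable {V : Type*} {G : SimpleGraph V}

theorem _root_.SimpleGraph.Connected.ecc_le_iff (hG : G.Connected) (u : V) (n : ℕ) :
    ecc G u ≤ n ↔ ∀ v, G.dist u v ≤ n := by
  simp only [ecc, iSup_le_iff, ← (hG u _).coe_dist_eq_edist, Nat.cast_le]

theorem _root_.SimpleGraph.Connected.lt_ecc_iff (hG : G.Connected) (u : V) (n : ℕ) :
    n < ecc G u ↔ ∃ v, n < G.dist u v := by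
  simpa using (hG.ecc_le_iff u n).not

theorem dist_le_ecc (u v : V) : (G.dist u v : ℕ∞) ≤ ecc G u :=
  (ENat.natCast_toNat_le_self _).trans (le_iSup _ v)

namespace IsASC

variable {r : ℕ} {a a' b b' z : V}

theorem le_ecc (hG : IsASC r G) (u : V) : r ≤ ecc G u :=
  hG.2.1 ▸ iInf_le _ u

theorem exists_le_dist (hG : IsASC r G) (u : V) : ∃ v, r ≤ G.dist u v := by
  by_contra! h
  have hr : 0 < r := (Nat.zero_le _).trans_lt (h u)
  have hle : ecc G u ≤ (r - 1 : ℕ) := (hG.1.ecc_le_iff u _).2 fun v ↦ by have := h v; omega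
  have := (hG.le_ecc u).trans hle
  norm_cast at this
  omega

theorem ecc_ne_graphRadius_iff (hG : IsASC r G) (u : V) :
    ecc G u ≠ graphRadius G ↔ ∃ v, r < G.dist u v := by
  rw [hG.2.1, ← hG.1.lt_ecc_iff]
  exact ⟨fun h ↦ (hG.le_ecc u).lt_of_ne' h, ne_of_gt⟩

theorem dist_le_of_ne_of_ne (hG : IsASC r G) (hab : a ≠ b) (ha : r < G.dist a a')
    (hb : r < G.dist b b') (hza : z ≠ a) (hzb : z ≠ b) (y : V) : G.dist z y ≤ r := by
  by_contra! hz
  have hsub : ({a, b, z} : Set V) ⊆ {u | ecc G u ≠ graphRadius G} := by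
    rintro x (rfl | rfl | rfl) <;> rw [Set.mem_ofPred_eq, hG.ecc_ne_graphRadius_iff] <;>
      exact ⟨_, ‹_›⟩
  have := Set.ncard_le_ncard hsub (Set.finite_of_ncard_ne_zero (by rw [hG.2.2]; norm_num))
  rw [hG.2.2, Set.ncard_eq_three.mpr ⟨a, b, z, hab, hza.symm, hzb.symm, rfl⟩] at this
  omega

theorem exists_lt_dist (hG : IsASC r G) : ∃ u v, r < G.dist u v := by
  obtain ⟨u, hu⟩ := Set.nonempty_of_ncard_ne_zero (by rw [hG.2.2]; norm_num)
  exact ⟨u, (hG.ecc_ne_graphRadius_iff u).1 hu⟩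

end IsASC

theorem isASC_of_forall_dist {r : ℕ} (hG : G.Connected) (hfar : ∀ u, ∃ v, r ≤ G.dist u v)
    {a b x : V} (hab : r < G.dist a b) (hxa : x ≠ a) (hxb : x ≠ b)
    (hcentral : ∀ u, u ≠ a → u ≠ b → ∀ v, G.dist u v ≤ r) : IsASC r G := by
  have hle : ∀ u, (r : ℕ∞) ≤ ecc G u := fun u ↦ by
    obtain ⟨v, hv⟩ := hfar u
    exact (Nat.cast_le.2 hv).trans (dist_le_ecc u v)
  have hecc : ∀ u, u ≠ a → u ≠ b → ecc G u = r := fun u hua hub ↦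
    le_antisymm ((hG.ecc_le_iff u r).2 (hcentral u hua hub)) (hle u)
  have hrad : graphRadius G = r := le_antisymm (iInf_le_of_le x (hecc x hxa hxb).le) (le_iInf hle)
  have hne : a ≠ b := by rintro rfl; simp at hab
  have hset : {u | ecc G u ≠ graphRadius G} = {a, b} := by
    ext u
    simp only [Set.mem_ofPred_eq, Set.mem_insert_iff, Set.mem_singleton_iff, hrad]
    refine ⟨fun h ↦ ?_, ?_⟩
    · by_contra! hu
      exact h (hecc u hu.1 hu.2)
    · rintro (rfl | rfl)
      · exact ne_of_gt ((hG.lt_ecc_iff _ r).2 ⟨b, hab⟩)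
      · exact ne_of_gt ((hG.lt_ecc_iff _ r).2 ⟨a, dist_comm (G := G) ▸ hab⟩)
  exact ⟨hG, hrad, hset ▸ Set.ncard_pair hne⟩

end Eccentricity

section K1JoinTP2

variable {t : ℕ}

theorem K1JoinTP2_adj_none (p : Fin t × Fin 2) : (K1JoinTP2 t).Adj none (some p) := by
  simp [K1JoinTP2]

theorem K1JoinTP2_adj_some {i j : Fin t} {a b : Fin 2} :
    (K1JoinTP2 t).Adj (some (i, a)) (some (j, b)) ↔ i = j ∧ a ≠ b := by
  simp only [K1JoinTP2, fromRel_adj, ne_eq, Option.some.injEq, Prod.mk.injEq, reduceCtorEq,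
    false_or]
  aesop

end K1JoinTP2

section Extension

variable {t : ℕ} {N : Type*} {H : SimpleGraph (Option (Fin t × Fin 2) ⊕ N)}
  {z : Option (Fin t × Fin 2) ⊕ N} {u f v : N}

theorem dist_inl_none_inl_le_one (hind : ∀ u v, H.Adj (inl u) (inl v) ↔ (K1JoinTP2 t).Adj u v)
    (x : Option (Fin t × Fin 2)) : H.dist (inl none) (inl x) ≤ 1 := by
  rcases x with - | p
  · simp
  · exact (dist_eq_one_iff_adj.2 ((hind _ _).2 (K1JoinTP2_adj_none p))).le

theorem dist_inl_le_two (hconn : H.Connected)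
    (hind : ∀ u v, H.Adj (inl u) (inl v) ↔ (K1JoinTP2 t).Adj u v)
    (hz : H.dist (inl none) z ≤ 1) (x : Option (Fin t × Fin 2)) : H.dist z (inl x) ≤ 2 := by
  have := hconn.dist_triangle (u := z) (v := inl none) (w := inl x)
  have := dist_inl_none_inl_le_one hind x
  rw [dist_comm] at hz
  omega

theorem not_adj_inl_of_three_le_dist (hconn : H.Connected)
    (hind : ∀ u v, H.Adj (inl u) (inl v) ↔ (K1JoinTP2 t).Adj u v)
    (hz : 3 ≤ H.dist (inl none) z) (x : Option (Fin t × Fin 2)) : ¬ H.Adj z (inl x) := fun h ↦ by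
  have h₁ := hconn.dist_le_dist_add_one (v := inl none) h
  have h₂ := dist_inl_none_inl_le_one hind x
  rw [SimpleGraph.dist_comm (u := inl x)] at h₁
  rw [SimpleGraph.dist_comm] at hz
  omega

theorem exists_three_le_dist_inr (hH : IsASC 3 H)
    (hind : ∀ u v, H.Adj (inl u) (inl v) ↔ (K1JoinTP2 t).Adj u v)
    (hz : H.dist (inl none) z ≤ 1) : ∃ j, 3 ≤ H.dist z (inr j) := by
  obtain ⟨y | j, hy⟩ := hH.exists_le_dist z
  · have := dist_inl_le_two hH.1 hind hz y
    omega
  · exact ⟨j, hy⟩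

theorem not_isASC_of_forall_dist_inr_le_one
    (hind : ∀ u v, H.Adj (inl u) (inl v) ↔ (K1JoinTP2 t).Adj u v)
    {w : Option (Fin t × Fin 2) ⊕ N} (hz : H.dist (inl none) z ≤ 1) (hzw : H.Adj z w)
    (hw : ∀ j, H.dist w (inr j) ≤ 1) : ¬ IsASC 3 H := by
  intro hH
  obtain ⟨j, hj⟩ := exists_three_le_dist_inr hH hind hz
  have := hH.1.dist_le_dist_add_one (v := inr j) hzw
  have := hw j
  omega

theorem exists_geodesic (hH : IsASC 3 H)
    (hind : ∀ u v, H.Adj (inl u) (inl v) ↔ (K1JoinTP2 t).Adj u v) :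
    ∃ (x : Option (Fin t × Fin 2) ⊕ N) (u f : N), H.dist (inl none) x ≤ 1 ∧ H.Adj x (inr u) ∧
      H.Adj (inr u) (inr f) ∧ H.dist (inl none) (inr u) = 2 ∧ H.dist (inl none) (inr f) = 3 := by
  have hconn := hH.1
  obtain ⟨j, hj⟩ := exists_three_le_dist_inr hH hind (z := inl none) (by simp)
  obtain ⟨y | f, hf⟩ := hconn.exists_dist_eq_of_le hj
  · have := dist_inl_none_inl_le_one hind y
    omega
  obtain ⟨y | u, hfu, hu⟩ := hconn.exists_adj_dist_eq_add_one (u := inr f) (v := inl none) (by simp)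
  · exact absurd hfu (not_adj_inl_of_three_le_dist hconn hind hf.ge y)
  obtain ⟨x, hux, hx⟩ := hconn.exists_adj_dist_eq_add_one (u := inr u) (v := inl none) (by simp)
  simp only [SimpleGraph.dist_comm (v := inl none)] at hf hx hu
  exact ⟨x, u, f, by omega, hux.symm, hfu.symm, by omega, hf⟩

theorem eq_none_or_of_adj_inl_some
    (hind : ∀ u v, H.Adj (inl u) (inl v) ↔ (K1JoinTP2 t).Adj u v) {i : Fin t} {a : Fin 2}
    {y : Option (Fin t × Fin 2)} (h : H.Adj (inl (some (i, a))) (inl y)) :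
    y = none ∨ ∃ b, y = some (i, b) := by
  rcases y with - | ⟨j, b⟩
  · exact .inl rfl
  · exact .inr ⟨b, by rw [((K1JoinTP2_adj_some).1 ((hind _ _).1 h)).1]⟩

theorem three_le_dist_inl_some (hconn : H.Connected)
    (hind : ∀ u v, H.Adj (inl u) (inl v) ↔ (K1JoinTP2 t).Adj u v) {i : Fin t} {a : Fin 2}
    (hc : ¬ H.Adj (inl none) z) (hpair : ∀ b, ¬ H.Adj (inl (some (i, b))) z)
    (hnew : ∀ j, H.Adj (inl (some (i, a))) (inr j) → ¬ H.Adj (inr j) z) :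
    3 ≤ H.dist (inl (some (i, a))) z := by
  refine hconn.three_le_dist (fun h ↦ hc (h ▸ (hind _ _).2 (K1JoinTP2_adj_none _))) (hpair a) ?_
  rintro (y | j) hy
  · rcases eq_none_or_of_adj_inl_some hind hy with rfl | ⟨b, rfl⟩
    · exact hc
    · exact hpair b
  · exact hnew j hy


theorem not_isASC_of_pendant_of_not_adj
    (hind : ∀ u v, H.Adj (inl u) (inl v) ↔ (K1JoinTP2 t).Adj u v)
    (hf : 3 ≤ H.dist (inl none) (inr f)) (hfu : ∀ y, H.Adj (inr f) y → y = inr u)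
    (huv : ¬ H.Adj (inr u) (inr v)) (hvu : v ≠ u) (hvf : v ≠ f)
    (hcov : ∀ j, j = u ∨ j = f ∨ j = v) : ¬ IsASC 3 H := by
  intro hH
  have hconn := hH.1
  have hpend : ∀ w, w ≠ inr f → H.dist w (inr f) = H.dist w (inr u) + 1 :=
    fun w hw ↦ hconn.dist_eq_dist_add_one_of_forall_adj_eq hfu hw
  have hkey : ∀ o, H.Adj (inl o) (inr u) → 3 ≤ H.dist (inl o) (inr v) := by
    intro o ho
    obtain ⟨j, hj⟩ := exists_three_le_dist_inr hH hind (dist_inl_none_inl_le_one hind o)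
    have h₁ := dist_eq_one_iff_adj.2 ho
    rcases hcov j with rfl | rfl | rfl
    · omega
    · rw [hpend _ (by simp)] at hj
      omega
    · exact hj
  have hvu₂ := hconn.one_lt_dist_of_ne_of_not_adj (u := inr v) (by simpa) (fun h ↦ huv h.symm)
  have hvf₁ := hpend (inr v) (by simpa)
  have hfne : f ≠ u := by
    rintro rfl
    omega
  have huv₄ : 3 + 1 ≤ H.dist (inr u) (inr v) := by
    refine hconn.le_dist_of_forall_adj (by simpa using hvu.symm) ?_
    rintro (o | j) hj
    · exact hkey o hj.symm
    · rcases hcov j with rfl | rfl | rfl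
      · exact (hj.ne rfl).elim
      · rw [SimpleGraph.dist_comm]
        omega
      · exact absurd hj huv
  -- `u`, `v` and `f` would all be non-central.
  have hcomm₁ := SimpleGraph.dist_comm (G := H) (u := inr u) (v := inr v)
  have hcomm₂ := SimpleGraph.dist_comm (G := H) (u := inr f) (v := inr v)
  have := hH.dist_le_of_ne_of_ne (a := inr u) (b := inr v) (z := inr f) (a' := inr v)
    (b' := inr u) (by simpa using hvu.symm) (by omega) (by omega)
    (by simpa using hfne) (by simpa using hvf.symm) (inr v)
  omega

theorem not_isASC_of_pendant_at_far
    (hind : ∀ u v, H.Adj (inl u) (inl v) ↔ (K1JoinTP2 t).Adj u v)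
    (hu : H.dist (inl none) (inr u) ≤ 2) (hf : 3 ≤ H.dist (inl none) (inr f))
    (huf : H.Adj (inr u) (inr f)) (hv : ∀ y, H.Adj (inr v) y → y = inr f) (hvu : v ≠ u)
    (hcov : ∀ j, j = u ∨ j = f ∨ j = v) : ¬ IsASC 3 H := by
  intro hH
  have hconn := hH.1
  have hfold := not_adj_inl_of_three_le_dist hconn hind hf
  have hpend : ∀ w, w ≠ inr v → H.dist w (inr v) = H.dist w (inr f) + 1 :=
    fun w hw ↦ hconn.dist_eq_dist_add_one_of_forall_adj_eq hv hw
  have hcv : 3 < H.dist (inl none) (inr v) := by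
    rw [hpend _ (by simp)]
    omega
  -- `c` and `v` are the two non-central vertices, so every leaf is within 2 of `f`.
  have hleaf : ∀ p, H.Adj (inl (some p)) (inr u) := by
    intro p
    have hle := hH.dist_le_of_ne_of_ne (a := inl none) (b := inr v) (z := inl (some p))
      (by simp) hcv (by rwa [SimpleGraph.dist_comm]) (by simp) (by simp) (inr v)
    rw [hpend _ (by simp)] at hle
    obtain ⟨w, hpw, hwf⟩ := hconn.exists_adj_adj_of_dist_le_two (u := inl (some p)) (by simp)
      (fun h ↦ hfold _ h.symm) (by omega)
    rcases w with o | j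
    · exact absurd hwf.symm (hfold o)
    · rcases hcov j with rfl | rfl | rfl
      · exact hpw
      · exact (hwf.ne rfl).elim
      · exact absurd (hv _ hpw.symm) (by simp)
  obtain ⟨y, hy⟩ := hH.exists_le_dist (inr u)
  have huf₁ := dist_eq_one_iff_adj.2 huf
  rcases y with (- | p) | j
  · rw [SimpleGraph.dist_comm] at hy
    omega
  · have := dist_eq_one_iff_adj.2 (hleaf p).symm
    omega
  · rcases hcov j with rfl | rfl | rfl
    · simp at hy
    · omega
    · have := hpend (inr u) (by simpa using hvu.symm)
      omega

theorem dist_inl_some_inl_some_le_one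
    (hind : ∀ u v, H.Adj (inl u) (inl v) ↔ (K1JoinTP2 t).Adj u v) (i : Fin t) (a b : Fin 2) :
    H.dist (inl (some (i, a))) (inl (some (i, b))) ≤ 1 := by
  by_cases h : a = b
  · simp [h]
  · exact (dist_eq_one_iff_adj.2 ((hind _ _).2 (K1JoinTP2_adj_some.2 ⟨rfl, h⟩))).le

theorem not_isASC_of_forall_dist_le_three (hold : ∀ o y, H.dist (inl o) y ≤ 3)
    (hnew : ∀ j, H.dist (inr j) (inr f) ≤ 1) : ¬ IsASC 3 H := by
  intro hH
  obtain ⟨x, y, hxy⟩ := hH.exists_lt_dist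
  rcases x with o | j
  · exact absurd (hold o y) (by omega)
  rcases y with o | j'
  · rw [SimpleGraph.dist_comm] at hxy
    exact absurd (hold o (inr j)) (by omega)
  have := hH.1.dist_triangle (u := inr j) (v := inr f) (w := inr j')
  have := hnew j
  have := hnew j'
  rw [SimpleGraph.dist_comm (u := inr j')] at this
  omega

theorem four_le_dist_inr_inl_some (hconn : H.Connected)
    (hind : ∀ u v, H.Adj (inl u) (inl v) ↔ (K1JoinTP2 t).Adj u v)
    (hf : 3 ≤ H.dist (inl none) (inr f)) (hcu : ¬ H.Adj (inl none) (inr u))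
    (hcv : ¬ H.Adj (inl none) (inr v)) (huv : ¬ H.Adj (inr u) (inr v))
    (hcov : ∀ j, j = u ∨ j = f ∨ j = v) {i : Fin t}
    (hpair : ∀ b, ¬ H.Adj (inl (some (i, b))) (inr u) ∧ ¬ H.Adj (inl (some (i, b))) (inr v))
    (a : Fin 2) : 3 + 1 ≤ H.dist (inr f) (inl (some (i, a))) := by
  have hfold := not_adj_inl_of_three_le_dist hconn hind hf
  have hu₃ : 3 ≤ H.dist (inl (some (i, a))) (inr u) := by
    refine three_le_dist_inl_some hconn hind hcu (fun b ↦ (hpair b).1) fun j hj ↦ ?_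
    rcases hcov j with rfl | rfl | rfl
    · exact absurd hj (hpair a).1
    · exact absurd hj.symm (hfold _)
    · exact fun h ↦ huv h.symm
  have hv₃ : 3 ≤ H.dist (inl (some (i, a))) (inr v) := by
    refine three_le_dist_inl_some hconn hind hcv (fun b ↦ (hpair b).2) fun j hj ↦ ?_
    rcases hcov j with rfl | rfl | rfl
    · exact huv
    · exact absurd hj.symm (hfold _)
    · exact absurd hj (hpair a).2
  refine hconn.le_dist_of_forall_adj (by simp) ?_
  rintro (o | j) hj
  · exact absurd hj (hfold o)
  · rw [SimpleGraph.dist_comm]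
    rcases hcov j with rfl | rfl | rfl
    · exact hu₃
    · exact (hj.ne rfl).elim
    · exact hv₃

theorem not_isASC_of_adj_adj_of_not_adj
    (hind : ∀ u v, H.Adj (inl u) (inl v) ↔ (K1JoinTP2 t).Adj u v)
    (hu : H.dist (inl none) (inr u) ≤ 2) (hv : H.dist (inl none) (inr v) ≤ 2)
    (hf : H.dist (inl none) (inr f) = 3) (huf : H.Adj (inr u) (inr f))
    (hvf : H.Adj (inr v) (inr f)) (huv : ¬ H.Adj (inr u) (inr v))
    (hcov : ∀ j, j = u ∨ j = f ∨ j = v) : ¬ IsASC 3 H := by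
  intro hH
  have hconn := hH.1
  have hnew : ∀ j, H.dist (inr j) (inr f) ≤ 1 := fun j ↦ by
    rcases hcov j with rfl | rfl | rfl
    · exact (dist_eq_one_iff_adj.2 huf).le
    · simp
    · exact (dist_eq_one_iff_adj.2 hvf).le
  have hc : ∀ j, ¬ H.Adj (inl none) (inr j) := fun j h ↦ by
    have := hconn.dist_le_dist_add_one (v := inr f) h
    have := hnew j
    omega
  have htouch : ∀ i, ∃ b, H.Adj (inl (some (i, b))) (inr u) ∨
      H.Adj (inl (some (i, b))) (inr v) := by
    intro i
    by_contra! hpair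
    have h₀ := four_le_dist_inr_inl_some hconn hind hf.ge (hc u) (hc v) huv hcov hpair 0
    have h₁ := four_le_dist_inr_inl_some hconn hind hf.ge (hc u) (hc v) huv hcov hpair 1
    rw [SimpleGraph.dist_comm] at h₀ h₁
    have := hH.dist_le_of_ne_of_ne (z := inr f) (by simp) h₀ h₁ (by simp) (by simp)
      (inl (some (i, 0)))
    rw [SimpleGraph.dist_comm] at this
    omega
  refine not_isASC_of_forall_dist_le_three (fun o y ↦ ?_) hnew hH
  have hoc := dist_inl_none_inl_le_one hind o
  rw [SimpleGraph.dist_comm] at hoc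
  have := hconn.dist_triangle (u := inl o) (v := inl none) (w := y)
  rcases y with o' | j
  · have := dist_inl_none_inl_le_one hind o'
    omega
  rcases hcov j with rfl | rfl | rfl
  · omega
  · rcases o with - | ⟨i, a⟩
    · exact hf.le
    obtain ⟨b, hb⟩ := htouch i
    have := dist_inl_some_inl_some_le_one hind i a b
    have := hconn.dist_triangle (u := inl (some (i, a))) (v := inl (some (i, b))) (w := inr j)
    rcases hb with hb | hb
    · have := hconn.dist_le_dist_add_one (v := inr j) hb
      have := hnew u
      omega
    · have := hconn.dist_le_dist_add_one (v := inr j) hb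
      have := hnew v
      omega
  · omega

theorem not_isASC_of_forall_eq_or_eq_or_eq
    (hind : ∀ u v, H.Adj (inl u) (inl v) ↔ (K1JoinTP2 t).Adj u v)
    {x : Option (Fin t × Fin 2) ⊕ N} (hx : H.dist (inl none) x ≤ 1) (hxu : H.Adj x (inr u))
    (huf : H.Adj (inr u) (inr f)) (hu : H.dist (inl none) (inr u) = 2)
    (hf : H.dist (inl none) (inr f) = 3) (hvu : v ≠ u) (hvf : v ≠ f)
    (hcov : ∀ j, j = u ∨ j = f ∨ j = v) : ¬ IsASC 3 H := by
  intro hH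
  have hconn := hH.1
  by_cases huv : H.Adj (inr u) (inr v)
  · refine not_isASC_of_forall_dist_inr_le_one hind hx hxu (fun j ↦ ?_) hH
    rcases hcov j with rfl | rfl | rfl
    · simp
    · exact (dist_eq_one_iff_adj.2 huf).le
    · exact (dist_eq_one_iff_adj.2 huv).le
  by_cases hfv : H.Adj (inr f) (inr v)
  swap
  · refine not_isASC_of_pendant_of_not_adj hind hf.ge ?_ huv hvu hvf hcov hH
    rintro (o | j) hj
    · exact absurd hj (not_adj_inl_of_three_le_dist hconn hind hf.ge o)
    · rcases hcov j with rfl | rfl | rfl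
      · rfl
      · exact (hj.ne rfl).elim
      · exact absurd hj hfv
  by_cases hv : 3 ≤ H.dist (inl none) (inr v)
  · refine not_isASC_of_pendant_at_far hind hu.le hf.ge huf ?_ hvu hcov hH
    rintro (o | j) hj
    · exact absurd hj (not_adj_inl_of_three_le_dist hconn hind hv o)
    · rcases hcov j with rfl | rfl | rfl
      · exact absurd hj.symm huv
      · rfl
      · exact (hj.ne rfl).elim
  · exact not_isASC_of_adj_adj_of_not_adj hind hu.le (by omega) hf huf hfv.symm huv hcov hH

theorem three_lt_card_of_isASC [Fintype N] (hH : IsASC 3 H)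
    (hind : ∀ u v, H.Adj (inl u) (inl v) ↔ (K1JoinTP2 t).Adj u v) : 3 < Fintype.card N := by
  obtain ⟨x, u, f, hx, hxu, huf, hu, hf⟩ := exists_geodesic hH hind
  have hfu : f ≠ u := by
    rintro rfl
    omega
  by_cases h₂ : ∀ j, j = u ∨ j = f
  · refine (not_isASC_of_forall_dist_inr_le_one hind hx hxu (fun j ↦ ?_) hH).elim
    rcases h₂ j with rfl | rfl
    · simp
    · exact (dist_eq_one_iff_adj.2 huf).le
  push Not at h₂
  obtain ⟨v, hvu, hvf⟩ := h₂
  by_contra! hN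
  refine not_isASC_of_forall_eq_or_eq_or_eq hind hx hxu huf hu hf hvu hvf (fun j ↦ ?_) hH
  classical
  by_contra! hj
  have h₄ : ({u, f, v, j} : Finset N).card = 4 := by
    rw [Finset.card_insert_of_notMem (by simp [hfu.symm, hvu.symm, hj.1.symm]),
      Finset.card_insert_of_notMem (by simp [hvf.symm, hj.2.1.symm]),
      Finset.card_pair hj.2.2.symm]
  have := Finset.card_le_univ ({u, f, v, j} : Finset N)
  omega

end Extension

section Construction

def fourExtension (t : ℕ) : SimpleGraph (Option (Fin t × Fin 2) ⊕ Fin 4) :=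
  SimpleGraph.fromRel fun x y ↦ match x, y with
    | inl u, inl v => (K1JoinTP2 t).Adj u v
    | inl (some (i, _)), inr j => j = if (i : ℕ) = 0 then 0 else 1
    | inr j, inr _ => j = 2
    | _, _ => False

variable {t : ℕ}

@[simp]
theorem fourExtension_adj_inl_inl {u v : Option (Fin t × Fin 2)} :
    (fourExtension t).Adj (inl u) (inl v) ↔ (K1JoinTP2 t).Adj u v := by
  simp only [fourExtension, fromRel_adj, ne_eq, inl.injEq, (K1JoinTP2 t).adj_comm v u, or_self]
  exact ⟨And.right, fun h ↦ ⟨h.ne, h⟩⟩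

@[simp]
theorem fourExtension_adj_inl_inr {x : Option (Fin t × Fin 2)} {j : Fin 4} :
    (fourExtension t).Adj (inl x) (inr j) ↔
      ∃ i a, x = some (i, a) ∧ j = if (i : ℕ) = 0 then 0 else 1 := by
  rcases x with - | ⟨i, a⟩ <;> simp [fourExtension]

@[simp]
theorem fourExtension_adj_inr_inl {x : Option (Fin t × Fin 2)} {j : Fin 4} :
    (fourExtension t).Adj (inr j) (inl x) ↔
      ∃ i a, x = some (i, a) ∧ j = if (i : ℕ) = 0 then 0 else 1 := by
  rw [adj_comm, fourExtension_adj_inl_inr]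

@[simp]
theorem fourExtension_adj_inr_inr {j k : Fin 4} :
    (fourExtension t).Adj (inr j) (inr k) ↔ j ≠ k ∧ (j = 2 ∨ k = 2) := by
  simp [fourExtension]

theorem fourExtension_connected (ht : 2 ≤ t) : (fourExtension t).Connected := by
  refine (connected_iff_exists_forall_reachable _).2 ⟨inl none, ?_⟩
  have hleaf : ∀ p, (fourExtension t).Reachable (inl none) (inl (some p)) := fun p ↦
    Adj.reachable (by simp [K1JoinTP2_adj_none])
  have h₀ := (hleaf (⟨0, by omega⟩, 0)).trans (Adj.reachable (v := inr 0) (by simp))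
  have h₁ := (hleaf (⟨1, by omega⟩, 0)).trans (Adj.reachable (v := inr 1) (by simp))
  have h₂ := h₀.trans (Adj.reachable (v := inr 2) (by simp))
  rintro ((- | p) | j)
  · rfl
  · exact hleaf p
  · obtain rfl | rfl | rfl | rfl : j = 0 ∨ j = 1 ∨ j = 2 ∨ j = 3 := by omega
    exacts [h₀, h₁, h₂, h₂.trans (Adj.reachable (by simp))]

theorem fourExtension_dist_add_dist_le (ht : 2 ≤ t) {y : Option (Fin t × Fin 2) ⊕ Fin 4}
    (hy : y ≠ inr 3) :
    (fourExtension t).dist (inl none) y + (fourExtension t).dist y (inr 2) ≤ 3 := by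
  have hc₀ : (fourExtension t).Adj (inl none) (inl (some (⟨0, by omega⟩, 0))) := by
    simp [K1JoinTP2_adj_none]
  have hc₁ : (fourExtension t).Adj (inl none) (inl (some (⟨1, by omega⟩, 0))) := by
    simp [K1JoinTP2_adj_none]
  have h₀ : (fourExtension t).Adj (inl (some (⟨0, by omega⟩, 0))) (inr 0) := by simp
  have h₁ : (fourExtension t).Adj (inl (some (⟨1, by omega⟩, 0))) (inr 1) := by simp
  have h₀₂ : (fourExtension t).Adj (inr 0) (inr 2) := by simp
  have h₁₂ : (fourExtension t).Adj (inr 1) (inr 2) := by simp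
  rcases y with (- | ⟨i, a⟩) | j
  · simpa using dist_le (.cons hc₀ (.cons h₀ (.cons h₀₂ .nil)))
  · have hc : (fourExtension t).Adj (inl none) (inl (some (i, a))) := by
      simp [K1JoinTP2_adj_none]
    have hw : (fourExtension t).Adj (inl (some (i, a))) (inr (if (i : ℕ) = 0 then 0 else 1)) := by
      simp
    have hw₂ : (fourExtension t).Adj (inr (if (i : ℕ) = 0 then 0 else 1)) (inr 2) := by
      split_ifs <;> simp
    have := dist_le hc.toWalk
    have := dist_le (.cons hw (.cons hw₂ .nil))
    simp only [Walk.length_cons, Walk.length_nil] at *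
    omega
  · obtain rfl | rfl | rfl | rfl : j = 0 ∨ j = 1 ∨ j = 2 ∨ j = 3 := by omega
    · have := dist_le (.cons hc₀ (.cons h₀ .nil))
      have := dist_le h₀₂.toWalk
      simp only [Walk.length_cons, Walk.length_nil] at *
      omega
    · have := dist_le (.cons hc₁ (.cons h₁ .nil))
      have := dist_le h₁₂.toWalk
      simp only [Walk.length_cons, Walk.length_nil] at *
      omega
    · simpa using dist_le (.cons hc₀ (.cons h₀ (.cons h₀₂ .nil)))
    · exact absurd rfl hy


theorem fourExtension_eq_of_adj_inr_three {y : Option (Fin t × Fin 2) ⊕ Fin 4}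
    (h : (fourExtension t).Adj (inr 3) y) : y = inr 2 := by
  rcases y with x | j
  · simp [eq_ite_iff] at h
  · simp at h
    rw [h.2]

theorem fourExtension_three_le_dist_inl_none_inr_two (ht : 2 ≤ t) :
    3 ≤ (fourExtension t).dist (inl none) (inr 2) := by
  refine (fourExtension_connected ht).three_le_dist (by simp) (by simp) ?_
  rintro ((- | ⟨i, a⟩) | j) h₁ h₂
  · simp at h₁
  · simp [eq_ite_iff] at h₂
  · simp at h₁

theorem fourExtension_dist_le_three (ht : 2 ≤ t) {x : Option (Fin t × Fin 2) ⊕ Fin 4}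
    (hxc : x ≠ inl none) (hx3 : x ≠ inr 3) (y : Option (Fin t × Fin 2) ⊕ Fin 4) :
    (fourExtension t).dist x y ≤ 3 := by
  have hconn := fourExtension_connected ht
  have hx := fourExtension_dist_add_dist_le ht hx3
  have hcx := hconn.pos_dist_of_ne hxc.symm
  by_cases hy3 : y = inr 3
  · rw [hy3, hconn.dist_eq_dist_add_one_of_forall_adj_eq
      (fun _ ↦ fourExtension_eq_of_adj_inr_three) (hy3 ▸ hx3)]
    omega
  · have hy := fourExtension_dist_add_dist_le ht hy3
    have := hconn.dist_triangle (u := x) (v := inl none) (w := y)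
    have := hconn.dist_triangle (u := x) (v := inr 2) (w := y)
    have := SimpleGraph.dist_comm (G := fourExtension t) (u := x) (v := inl none)
    have := SimpleGraph.dist_comm (G := fourExtension t) (u := inr 2) (v := y)
    omega

theorem fourExtension_exists_three_le_dist (ht : 2 ≤ t) (x : Option (Fin t × Fin 2) ⊕ Fin 4) :
    ∃ y, 3 ≤ (fourExtension t).dist x y := by
  have hconn := fourExtension_connected ht
  have hc₂ := fourExtension_three_le_dist_inl_none_inr_two ht
  have hpend : ∀ w, w ≠ inr 3 →
      (fourExtension t).dist w (inr 3) = (fourExtension t).dist w (inr 2) + 1 :=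
    fun _ ↦ hconn.dist_eq_dist_add_one_of_forall_adj_eq fun _ ↦ fourExtension_eq_of_adj_inr_three
  rcases x with (- | ⟨i, a⟩) | j
  · exact ⟨inr 3, by rw [hpend _ (by simp)]; omega⟩
  · refine ⟨inr 3, ?_⟩
    rw [hpend _ (by simp)]
    have := hconn.one_lt_dist_of_ne_of_not_adj (u := inl (some (i, a))) (v := inr 2) (by simp)
      (by simp [eq_ite_iff])
    omega
  obtain rfl | rfl | rfl | rfl : j = 0 ∨ j = 1 ∨ j = 2 ∨ j = 3 := by omega
  · refine ⟨inl (some (⟨1, by omega⟩, 0)), hconn.three_le_dist (by simp) (by simp) ?_⟩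
    rintro ((- | ⟨i, a⟩) | j) h₁ h₂
    · simp at h₁
    · simp [K1JoinTP2_adj_some] at h₁ h₂
      obtain ⟨rfl, -⟩ := h₂
      simp at h₁
    · simp [eq_ite_iff] at h₁ h₂
      omega
  · refine ⟨inl (some (⟨0, by omega⟩, 0)), hconn.three_le_dist (by simp) (by simp) ?_⟩
    rintro ((- | ⟨i, a⟩) | j) h₁ h₂
    · simp at h₁
    · simp [K1JoinTP2_adj_some] at h₁ h₂
      obtain ⟨rfl, -⟩ := h₂
      simp at h₁
    · simp [eq_ite_iff] at h₁ h₂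
      omega
  · exact ⟨inl none, by rwa [SimpleGraph.dist_comm]⟩
  · exact ⟨inl none, by rw [SimpleGraph.dist_comm, hpend _ (by simp)]; omega⟩

theorem isASC_fourExtension (ht : 2 ≤ t) : IsASC 3 (fourExtension t) := by
  have hconn := fourExtension_connected ht
  refine isASC_of_forall_dist hconn (fourExtension_exists_three_le_dist ht) (a := inl none)
    (b := inr 3) (x := inr 2) ?_ (by simp) (by simp)
    fun x hxc hx3 ↦ fourExtension_dist_le_three ht hxc hx3
  rw [hconn.dist_eq_dist_add_one_of_forall_adj_eq (fun _ ↦ fourExtension_eq_of_adj_inr_three)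
    (by simp)]
  have := fourExtension_three_le_dist_inl_none_inr_two ht
  omega

end Construction

/-- For every integer `t ≥ 3`, the 3-ASC index of `K_1 ⊕ tP_2` equals 4. -/
theorem theta_three_K1_join_tP2 (t : ℕ) (ht : 3 ≤ t) :
    theta 3 (K1JoinTP2 t) = 4 := by
  refine IsLeast.csInf_eq ⟨⟨fourExtension t, isASC_fourExtension (by omega),
    fun _ _ ↦ fourExtension_adj_inl_inl⟩, ?_⟩
  rintro k ⟨H, hH, hind⟩
  simpa [Nat.succ_le_iff] using three_lt_card_of_isASC hH hind

end AscPaper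
end
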